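/- Let (κ,ρ) ∈ (0,1] × (0,∞). (1) If κ < 1, or if κ = 1 and ρ ≤ 1, then each of the maps β ↦ φ₀(κ,ρ,β) and β ↦ φ₁(κ,ρ,β) tends to 0 as β → 0 and to ∞ as β → ∞. (2) If ρ²κ ≤ 1, then β ↦ φ₀(κ,ρ,β) and β ↦ φ₁(κ,ρ,β) are increasing bijections of (0,∞). (3) If κρ < 1 + √(1−κ²), then φ₀(κ,ρ,β) > φ₁(κ,ρ,β) for every β ∈ (0,∞); the same conclusion φ₀(κ,ρ,β) > φ₁(κ,ρ,β) also holds whenever ρ²κ ≤ 1. -/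

import Mathlib

open Real Filter Set

noncomputable section

/-- `φ₀(κ,ρ,β)`. -/
def phi0 (κ ρ β : ℝ) : ℝ :=
  β * ((1 - κ) * β ^ (2 * ρ) + 2 * (1 + κ * ρ) * β ^ ρ + 1 + κ)
    / ((1 - κ) * β ^ (2 * ρ) + 2 * (1 - κ * ρ) * β ^ ρ + 1 + κ)

/-- `φ₁(κ,ρ,β)`. -/
def phi1 (κ ρ β : ℝ) : ℝ :=
  β * ((1 + κ) * β ^ (2 * ρ) + 2 * (1 - κ * ρ) * β ^ ρ + 1 - κ)
    / ((1 + κ) * β ^ (2 * ρ) + 2 * (1 + κ * ρ) * β ^ ρ + 1 - κ)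

/-!
Write `t = β ^ ρ`. Then `φ₀(β) = β N(t) / D(t)` with `N = D + 4κρt`, and `φ₁` is `φ₀` with `κ`
replaced by `-κ`; at the same time `φ₁(β) = 1 / φ₀(1 / β)`, so the limits, monotonicity and
bijectivity of `φ₁` are those of `φ₀` transported by inversion. Where `D > 0` one has
`φ₀(β) ≥ β`, which gives the limit at `∞`, and `φ₀(β) ~ β` at `0`. The numerator of `φ₀'` is
`S² - 4ρ²κ t q(t)` for a square `S²` that dominates `4 t q(t)`, so `φ₀' > 0` when `ρ²κ ≤ 1`.
Finally `N(κ) D(-κ) - N(-κ) D(κ) = 8κρt(t+1)²`, so `φ₀ > φ₁` wherever `D > 0`, and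
`κρ < 1 + √(1 - κ²)` is a discriminant condition guaranteeing `D > 0` on `(0, ∞)`.
-/

open Topology

def phiNum (κ ρ t : ℝ) : ℝ := (1 - κ) * t ^ 2 + 2 * (1 + κ * ρ) * t + (1 + κ)

def phiDen (κ ρ t : ℝ) : ℝ := (1 - κ) * t ^ 2 + 2 * (1 - κ * ρ) * t + (1 + κ)

section

variable {κ ρ β t : ℝ}

lemma rpow_two_mul_eq_sq (hβ : 0 ≤ β) (ρ : ℝ) : β ^ (2 * ρ) = (β ^ ρ) ^ 2 := by
  rw [mul_comm]; exact_mod_cast rpow_mul_natCast hβ ρ 2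

lemma phi0_eq (κ ρ : ℝ) (hβ : 0 ≤ β) :
    phi0 κ ρ β = β * (phiNum κ ρ (β ^ ρ) / phiDen κ ρ (β ^ ρ)) := by
  rw [phi0, phiNum, phiDen, rpow_two_mul_eq_sq hβ, mul_div_assoc, add_assoc _ 1, add_assoc _ 1]

lemma phi1_eq_phi0_neg (κ ρ : ℝ) : phi1 κ ρ = phi0 (-κ) ρ := by
  ext β
  simp only [phi0, phi1]
  ring_nf

lemma phi1_eq_inv_phi0_inv (κ ρ : ℝ) (hβ : 0 < β) : phi1 κ ρ β = (phi0 κ ρ β⁻¹)⁻¹ := by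
  have ht : 0 < β ^ ρ := rpow_pos_of_pos hβ ρ
  rw [phi1_eq_phi0_neg, phi0_eq _ _ hβ.le, phi0_eq _ _ (inv_nonneg.2 hβ.le), inv_rpow hβ.le]
  simp only [phiNum, phiDen]
  field_simp
  ring

lemma phiDen_pos (hκ₀ : -1 ≤ κ) (hκ₁ : κ ≤ 1) (hκρ : κ * ρ ≤ 1) (ht : 0 < t) :
    0 < phiDen κ ρ t := by
  unfold phiDen
  nlinarith [mul_nonneg (sub_nonneg.2 hκρ) ht.le, mul_nonneg (sub_nonneg.2 hκ₁) (sq_nonneg t),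
    mul_pos ht ht]

lemma phiDen_pos_of_lt_one_add_sqrt (hκ₀ : -1 ≤ κ) (hκ₁ : κ ≤ 1)
    (h : κ * ρ < 1 + √(1 - κ ^ 2)) (ht : 0 < t) : 0 < phiDen κ ρ t := by
  rcases le_or_gt (κ * ρ) 1 with hκρ | hκρ
  · exact phiDen_pos hκ₀ hκ₁ hκρ ht
  have hs : √(1 - κ ^ 2) ^ 2 = 1 - κ ^ 2 := sq_sqrt (by nlinarith)
  have hdisc : (κ * ρ - 1) ^ 2 < 1 - κ ^ 2 := by nlinarith [sqrt_nonneg (1 - κ ^ 2)]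
  have hκ : κ < 1 := by nlinarith
  -- `(1 - κ) D(t) = ((1 - κ) t + 1 - κρ)² + (1 - κ²) - (κρ - 1)²`
  unfold phiDen
  nlinarith [sq_nonneg ((1 - κ) * t - (κ * ρ - 1))]

lemma phiNum_pos (hκ₀ : 0 ≤ κ) (hκ₁ : κ ≤ 1) (hρ : 0 ≤ ρ) (ht : 0 ≤ t) : 0 < phiNum κ ρ t := by
  unfold phiNum
  nlinarith [mul_nonneg (mul_nonneg hκ₀ hρ) ht, mul_nonneg (sub_nonneg.2 hκ₁) (sq_nonneg t)]

lemma phiDen_le_phiNum (hκρ : 0 ≤ κ * ρ) (ht : 0 ≤ t) : phiDen κ ρ t ≤ phiNum κ ρ t := by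
  unfold phiDen phiNum
  nlinarith [mul_nonneg hκρ ht]

def phiDerivNum (κ ρ t : ℝ) : ℝ :=
  phiNum κ ρ t * phiDen κ ρ t + 4 * κ * ρ ^ 2 * t * (1 + κ - (1 - κ) * t ^ 2)

lemma hasDerivAt_phi0 (hβ : 0 < β) (hD : phiDen κ ρ (β ^ ρ) ≠ 0) :
    HasDerivAt (phi0 κ ρ) (phiDerivNum κ ρ (β ^ ρ) / phiDen κ ρ (β ^ ρ) ^ 2) β := by
  have hρ : HasDerivAt (fun β : ℝ => β ^ ρ) (ρ * β ^ (ρ - 1)) β :=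
    hasDerivAt_rpow_const (Or.inl hβ.ne')
  have h2ρ : HasDerivAt (fun β : ℝ => β ^ (2 * ρ)) (2 * ρ * β ^ (2 * ρ - 1)) β :=
    hasDerivAt_rpow_const (Or.inl hβ.ne')
  have hquad : ∀ c, HasDerivAt (fun β : ℝ => (1 - κ) * β ^ (2 * ρ) + c * β ^ ρ + 1 + κ)
      ((1 - κ) * (2 * ρ * β ^ (2 * ρ - 1)) + c * (ρ * β ^ (ρ - 1))) β := fun c =>
    (((h2ρ.const_mul _).add (hρ.const_mul c)).add_const 1).add_const κ
  have hD' : (1 - κ) * β ^ (2 * ρ) + 2 * (1 - κ * ρ) * β ^ ρ + 1 + κ ≠ 0 := by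
    rwa [rpow_two_mul_eq_sq hβ.le, add_assoc _ 1]
  refine (((hasDerivAt_id β).mul (hquad _)).div (hquad _) hD').congr_deriv ?_
  simp only [Pi.mul_apply, id]
  rw [rpow_sub hβ, rpow_sub hβ, rpow_one, rpow_two_mul_eq_sq hβ.le]
  unfold phiDen at hD
  unfold phiDerivNum phiNum phiDen
  field_simp
  ring

lemma phiDerivNum_pos (hκ₀ : 0 ≤ κ) (hκ₁ : κ ≤ 1) (h : ρ ^ 2 * κ ≤ 1) (ht : 0 ≤ t) :
    0 < phiDerivNum κ ρ t := by
  have key : phiDerivNum κ ρ t = ((1 - κ) * t ^ 2 + 2 * t + (1 + κ)) ^ 2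
      - 4 * (ρ ^ 2 * κ) * t * ((1 - κ) * t ^ 2 + κ * t - (1 + κ)) := by
    unfold phiDerivNum phiNum phiDen; ring
  rw [key]
  -- if `q > 0`, use `ρ²κ ≤ 1` and `S² - 4tq = ((1 - κ)t² + 1 + κ)² + 8(1 + κ)t + 4(1 - κ)t²`
  rcases le_or_gt ((1 - κ) * t ^ 2 + κ * t - (1 + κ)) 0 with hq | hq
  · nlinarith [sq_nonneg ((1 - κ) * t ^ 2 + (1 + κ)), mul_nonneg (sub_nonneg.2 hκ₁) (sq_nonneg t),
      mul_nonneg (mul_nonneg (mul_nonneg (sq_nonneg ρ) hκ₀) ht) (neg_nonneg.2 hq)]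
  · nlinarith [sq_nonneg ((1 - κ) * t ^ 2 + (1 + κ)), mul_nonneg ht hq.le,
      mul_nonneg ht (sq_nonneg t)]

lemma mul_le_one_of_sq_mul_le_one (hκ₀ : 0 ≤ κ) (hκ₁ : κ ≤ 1) (h : ρ ^ 2 * κ ≤ 1) :
    κ * ρ ≤ 1 := by
  nlinarith [mul_le_mul_of_nonneg_left h hκ₀]

lemma continuousOn_phi0 (hκ₀ : -1 ≤ κ) (hκ₁ : κ ≤ 1) (hκρ : κ * ρ ≤ 1) :
    ContinuousOn (phi0 κ ρ) (Ioi 0) := fun _ hβ =>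
  (hasDerivAt_phi0 hβ (phiDen_pos hκ₀ hκ₁ hκρ (rpow_pos_of_pos hβ ρ)).ne').continuousAt
    |>.continuousWithinAt

lemma mapsTo_phi0 (hκ₀ : 0 ≤ κ) (hκ₁ : κ ≤ 1) (hρ : 0 ≤ ρ) (hκρ : κ * ρ ≤ 1) :
    MapsTo (phi0 κ ρ) (Ioi 0) (Ioi 0) := fun β hβ => by
  have ht : 0 < β ^ ρ := rpow_pos_of_pos hβ ρ
  rw [mem_Ioi, phi0_eq κ ρ hβ.le]
  exact mul_pos hβ (div_pos (phiNum_pos hκ₀ hκ₁ hρ ht.le) (phiDen_pos (by linarith) hκ₁ hκρ ht))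

lemma strictMonoOn_phi0 (hκ₀ : 0 ≤ κ) (hκ₁ : κ ≤ 1) (h : ρ ^ 2 * κ ≤ 1) :
    StrictMonoOn (phi0 κ ρ) (Ioi 0) := by
  have hκρ := mul_le_one_of_sq_mul_le_one hκ₀ hκ₁ h
  have hD : ∀ β ∈ Ioi (0 : ℝ), 0 < phiDen κ ρ (β ^ ρ) := fun β hβ =>
    phiDen_pos (by linarith) hκ₁ hκρ (rpow_pos_of_pos hβ ρ)
  rw [← interior_Ioi] at hD
  refine strictMonoOn_of_hasDerivWithinAt_pos (convex_Ioi 0)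
    (continuousOn_phi0 (by linarith) hκ₁ hκρ)
    (fun β hβ => (hasDerivAt_phi0 (interior_subset hβ) (hD β hβ).ne').hasDerivWithinAt)
    (fun β hβ => div_pos (phiDerivNum_pos hκ₀ hκ₁ h (rpow_nonneg (interior_subset hβ).le ρ))
      (pow_pos (hD β hβ) 2))

lemma tendsto_phi0_nhdsGT_zero (hκ : -1 < κ) (hρ : 0 < ρ) :
    Tendsto (phi0 κ ρ) (𝓝[>] 0) (𝓝[>] 0) := by
  have ht : Tendsto (fun β : ℝ => β ^ ρ) (𝓝[>] 0) (𝓝 0) := by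
    simpa [zero_rpow hρ.ne'] using
      (continuousAt_rpow_const 0 ρ (Or.inr hρ.le)).tendsto.mono_left nhdsWithin_le_nhds
  have hg : ContinuousAt (fun t => phiNum κ ρ t / phiDen κ ρ t) 0 := by
    unfold phiNum phiDen
    exact ContinuousAt.div (by fun_prop) (by fun_prop) (by simp; linarith)
  have hg0 : phiNum κ ρ 0 / phiDen κ ρ 0 = 1 := by
    have : 1 + κ ≠ 0 := by linarith
    simp [phiNum, phiDen, this]
  have hlim : Tendsto (fun β : ℝ => β * (phiNum κ ρ (β ^ ρ) / phiDen κ ρ (β ^ ρ)))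
      (𝓝[>] 0) (𝓝 (0 * 1)) := by
    rw [← hg0]
    exact (tendsto_nhdsWithin_of_tendsto_nhds tendsto_id).mul (hg.tendsto.comp ht)
  have heq : phi0 κ ρ =ᶠ[𝓝[>] 0] fun β => β * (phiNum κ ρ (β ^ ρ) / phiDen κ ρ (β ^ ρ)) := by
    filter_upwards [self_mem_nhdsWithin] with β hβ using phi0_eq κ ρ (le_of_lt hβ)
  rw [zero_mul] at hlim
  refine tendsto_nhdsWithin_iff.2 ⟨hlim.congr' heq.symm, ?_⟩
  have hpos : ∀ᶠ β in 𝓝[>] (0 : ℝ), 0 < phiNum κ ρ (β ^ ρ) / phiDen κ ρ (β ^ ρ) :=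
    (hg.tendsto.comp ht).eventually (lt_mem_nhds (by rw [hg0]; exact one_pos))
  filter_upwards [heq, hpos, self_mem_nhdsWithin] with β hβ hg hβ0
  rw [hβ]
  exact mul_pos hβ0 hg

lemma eventually_phiDen_pos (hκ₀ : 0 ≤ κ) (h : κ < 1 ∨ κ = 1 ∧ ρ ≤ 1) :
    ∀ᶠ t in atTop, 0 < phiDen κ ρ t := by
  rcases h with hκ | ⟨rfl, hρ⟩
  · filter_upwards [eventually_ge_atTop (2 * κ * ρ / (1 - κ)), eventually_gt_atTop 0]
      with t hbig ht
    have : 2 * κ * ρ ≤ t * (1 - κ) := (div_le_iff₀ (by linarith)).1 hbig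
    unfold phiDen
    nlinarith
  · filter_upwards [eventually_gt_atTop 0] with t ht
    exact phiDen_pos (by norm_num) le_rfl (by linarith) ht

lemma tendsto_phi0_atTop (hκρ : 0 ≤ κ * ρ) (hρ : 0 < ρ) (hD : ∀ᶠ t in atTop, 0 < phiDen κ ρ t) :
    Tendsto (phi0 κ ρ) atTop atTop := by
  refine tendsto_atTop_mono' atTop ?_ tendsto_id
  filter_upwards [(tendsto_rpow_atTop hρ).eventually hD, eventually_ge_atTop 0] with β hβD hβ
  rw [id, phi0_eq κ ρ hβ]
  exact le_mul_of_one_le_right hβ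
    ((one_le_div hβD).2 (phiDen_le_phiNum hκρ (rpow_nonneg hβ ρ)))

lemma surjOn_Ioi_of_tendsto {f : ℝ → ℝ} {a b : ℝ} (hf : ContinuousOn f (Ioi a))
    (ha : Tendsto f (𝓝[>] a) (𝓝 b)) (htop : Tendsto f atTop atTop) :
    SurjOn f (Ioi a) (Ioi b) := by
  intro y (hy : b < y)
  obtain ⟨x₀, hx₀y, hx₀⟩ := ((ha.eventually_lt_const hy).and self_mem_nhdsWithin).exists
  obtain ⟨x₁, hyx₁, hx₀x₁⟩ := ((htop.eventually_gt_atTop y).and (eventually_ge_atTop x₀)).exists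
  have hsub : Icc x₀ x₁ ⊆ Ioi a := fun x hx => lt_of_lt_of_le hx₀ hx.1
  obtain ⟨x, hx, rfl⟩ := intermediate_value_Icc hx₀x₁ (hf.mono hsub) ⟨hx₀y.le, hyx₁.le⟩
  exact ⟨x, hsub hx, rfl⟩

lemma bijOn_phi0 (hκ₀ : 0 ≤ κ) (hκ₁ : κ ≤ 1) (hρ : 0 < ρ) (h : ρ ^ 2 * κ ≤ 1) :
    BijOn (phi0 κ ρ) (Ioi 0) (Ioi 0) := by
  have hκρ := mul_le_one_of_sq_mul_le_one hκ₀ hκ₁ h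
  have hD : ∀ᶠ t in atTop, 0 < phiDen κ ρ t :=
    (eventually_gt_atTop 0).mono fun _ ht => phiDen_pos (by linarith) hκ₁ hκρ ht
  refine ⟨mapsTo_phi0 hκ₀ hκ₁ hρ.le hκρ, (strictMonoOn_phi0 hκ₀ hκ₁ h).injOn, ?_⟩
  exact surjOn_Ioi_of_tendsto (continuousOn_phi0 (by linarith) hκ₁ hκρ)
    (tendsto_nhds_of_tendsto_nhdsWithin (tendsto_phi0_nhdsGT_zero (by linarith) hρ))
    (tendsto_phi0_atTop (by positivity) hρ hD)

lemma tendsto_phi1_atTop (hκ : -1 < κ) (hρ : 0 < ρ) : Tendsto (phi1 κ ρ) atTop atTop := by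
  refine (tendsto_inv_nhdsGT_zero.comp
    ((tendsto_phi0_nhdsGT_zero hκ hρ).comp tendsto_inv_atTop_nhdsGT_zero)).congr' ?_
  filter_upwards [eventually_gt_atTop 0] with β hβ using (phi1_eq_inv_phi0_inv κ ρ hβ).symm

lemma tendsto_phi1_nhdsGT_zero (h : Tendsto (phi0 κ ρ) atTop atTop) :
    Tendsto (phi1 κ ρ) (𝓝[>] 0) (𝓝 0) := by
  refine (tendsto_inv_atTop_zero.comp (h.comp tendsto_inv_nhdsGT_zero)).congr' ?_
  filter_upwards [self_mem_nhdsWithin] with β hβ using (phi1_eq_inv_phi0_inv κ ρ hβ).symm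

lemma strictMonoOn_phi1 (h : StrictMonoOn (phi0 κ ρ) (Ioi 0))
    (hpos : MapsTo (phi0 κ ρ) (Ioi 0) (Ioi 0)) : StrictMonoOn (phi1 κ ρ) (Ioi 0) := by
  intro a (ha : 0 < a) b (hb : 0 < b) hab
  rw [phi1_eq_inv_phi0_inv κ ρ ha, phi1_eq_inv_phi0_inv κ ρ hb]
  have hba : b⁻¹ < a⁻¹ := inv_strictAntiOn ha hb hab
  exact inv_strictAntiOn (hpos (inv_pos.2 hb)) (hpos (inv_pos.2 ha))
    (h (inv_pos.2 hb) (inv_pos.2 ha) hba)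

lemma bijOn_phi1 (h : BijOn (phi0 κ ρ) (Ioi 0) (Ioi 0)) : BijOn (phi1 κ ρ) (Ioi 0) (Ioi 0) := by
  have hinv : BijOn (·⁻¹ : ℝ → ℝ) (Ioi 0) (Ioi 0) :=
    InvOn.bijOn ⟨fun x _ => inv_inv x, fun x _ => inv_inv x⟩
      (fun _ hx => inv_pos.2 (mem_Ioi.1 hx)) (fun _ hx => inv_pos.2 (mem_Ioi.1 hx))
  exact (hinv.comp (h.comp hinv)).congr fun β hβ => (phi1_eq_inv_phi0_inv κ ρ hβ).symm

lemma phi1_lt_phi0 (hκ₀ : 0 < κ) (hκ₁ : κ ≤ 1) (hρ : 0 < ρ) (hβ : 0 < β)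
    (hD : 0 < phiDen κ ρ (β ^ ρ)) : phi1 κ ρ β < phi0 κ ρ β := by
  rw [phi1_eq_phi0_neg, phi0_eq _ _ hβ.le, phi0_eq _ _ hβ.le]
  set t := β ^ ρ
  have ht : 0 < t := rpow_pos_of_pos hβ ρ
  have hD' : 0 < phiDen (-κ) ρ t := phiDen_pos (by linarith) (by linarith) (by nlinarith) ht
  have hcross : phiNum κ ρ t * phiDen (-κ) ρ t - phiNum (-κ) ρ t * phiDen κ ρ t
      = 8 * κ * ρ * t * (t + 1) ^ 2 := by
    unfold phiNum phiDen; ring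
  refine mul_lt_mul_of_pos_left ((div_lt_div_iff₀ hD' hD).2 ?_) hβ
  nlinarith [mul_pos (mul_pos (mul_pos hκ₀ hρ) ht) (pow_pos (by linarith : 0 < t + 1) 2)]

end

theorem stmt13 (κ ρ : ℝ) (hκ : κ ∈ Set.Ioc (0:ℝ) 1) (hρ : 0 < ρ) :
    ((κ < 1 ∨ (κ = 1 ∧ ρ ≤ 1)) →
      (Tendsto (fun β => phi0 κ ρ β) (nhdsWithin 0 (Set.Ioi 0)) (nhds 0) ∧
       Tendsto (fun β => phi0 κ ρ β) atTop atTop ∧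
       Tendsto (fun β => phi1 κ ρ β) (nhdsWithin 0 (Set.Ioi 0)) (nhds 0) ∧
       Tendsto (fun β => phi1 κ ρ β) atTop atTop)) ∧
    (ρ ^ 2 * κ ≤ 1 →
      (StrictMonoOn (phi0 κ ρ) (Set.Ioi 0) ∧ Set.BijOn (phi0 κ ρ) (Set.Ioi 0) (Set.Ioi 0) ∧
       StrictMonoOn (phi1 κ ρ) (Set.Ioi 0) ∧ Set.BijOn (phi1 κ ρ) (Set.Ioi 0) (Set.Ioi 0))) ∧
    ((κ * ρ < 1 + Real.sqrt (1 - κ ^ 2) ∨ ρ ^ 2 * κ ≤ 1) →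
      ∀ β : ℝ, 0 < β → phi1 κ ρ β < phi0 κ ρ β) := by
  obtain ⟨hκ₀, hκ₁⟩ := hκ
  refine ⟨fun h => ?_, fun h => ?_, fun h β hβ => ?_⟩
  · have htop := tendsto_phi0_atTop (by positivity) hρ (eventually_phiDen_pos hκ₀.le h)
    exact ⟨tendsto_nhds_of_tendsto_nhdsWithin (tendsto_phi0_nhdsGT_zero (by linarith) hρ), htop,
      tendsto_phi1_nhdsGT_zero htop, tendsto_phi1_atTop (by linarith) hρ⟩
  · have hmono := strictMonoOn_phi0 hκ₀.le hκ₁ h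
    have hbij := bijOn_phi0 hκ₀.le hκ₁ hρ h
    exact ⟨hmono, hbij, strictMonoOn_phi1 hmono hbij.mapsTo, bijOn_phi1 hbij⟩
  · have ht : 0 < β ^ ρ := rpow_pos_of_pos hβ ρ
    refine phi1_lt_phi0 hκ₀ hκ₁ hρ hβ ?_
    rcases h with h | h
    · exact phiDen_pos_of_lt_one_add_sqrt (by linarith) hκ₁ h ht
    · exact phiDen_pos (by linarith) hκ₁ (mul_le_one_of_sq_mul_le_one hκ₀.le hκ₁ h) ht
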